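/- In the game of Figure 1 (player 1 chooses at s0 between s1 and s2; if s1 is chosen, player 2 chooses between s3 and s4; s2, s3, s4 are terminal), the query φ = AS(◇{s3}) ∨ (NZ(◇{s2}) ∧ NZ(◇{s4})) is not determined: classify player-1 strategies as σ1 (plays s1 with probability 1) or σ2 (plays s2 with positive probability) and player-2 strategies as τ1 (plays s3 with probability 1) or τ2 (plays s4 with positive probability); then σ1,τ1 ⊨ φ and σ2,τ2 ⊨ φ, but σ1,τ2 ⊭ φ and σ2,τ1 ⊭ φ, hence neither ∃σ ∀τ, σ,τ ⊨ φ nor ∃τ ∀σ, σ,τ ⊭ φ holds. -/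
import Mathlib

theorem fig1_not_determined :
    (¬ ∃ p ∈ Set.Icc (0:ℝ) 1, ∀ q ∈ Set.Icc (0:ℝ) 1,
        ((1-p)*(1-q) = 1) ∨ (0 < p ∧ 0 < (1-p)*q)) ∧
    (¬ ∃ q ∈ Set.Icc (0:ℝ) 1, ∀ p ∈ Set.Icc (0:ℝ) 1,
        ¬ (((1-p)*(1-q) = 1) ∨ (0 < p ∧ 0 < (1-p)*q))) := by
  constructor
  · rintro ⟨p, ⟨hp0, hp1⟩, h⟩
    rcases eq_or_lt_of_le hp0 with hp | hp
    · have := h 1 ⟨zero_le_one, le_refl 1⟩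
      simp [← hp] at this
    · have := h 0 ⟨le_refl 0, zero_le_one⟩
      rcases this with h1 | ⟨_, h2⟩
      · nlinarith
      · nlinarith
  · rintro ⟨q, ⟨hq0, hq1⟩, h⟩
    rcases eq_or_lt_of_le hq0 with hq | hq
    · exact h 0 ⟨le_refl 0, zero_le_one⟩ (Or.inl (by rw [← hq]; ring))
    · exact h (1/2) ⟨by norm_num, by norm_num⟩ (Or.inr ⟨by norm_num, by nlinarith⟩)
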